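/- arXiv:1511.01420 — 3 statements merged into one kernel-verified Lean document; each statement's English description precedes it below -/
import Mathlib

section
/- The subgroup P₀ = {[[a, b], [0, (aᵀ)⁻¹]] : a ∈ GL_n(ℂ), a⁻¹b symmetric} of Sp_{2n}(ℂ) is exactly the stabilizer in Sp_{2n}(ℂ) of the subspace ⟨e₁, …, eₙ⟩ ⊆ ℂ^{2n} spanned by the first n standard basis vectors. -/
open Matrix

lemma mem_span_inl_iff (n : ℕ) (v : (Fin n ⊕ Fin n) → ℂ) :
    v ∈ Submodule.span ℂ
        (Set.range fun i : Fin n => Pi.single (Sum.inl i : Fin n ⊕ Fin n) (1 : ℂ)) ↔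
      ∀ j, v (Sum.inr j) = 0 := by
  constructor
  · intro hv
    induction hv using Submodule.span_induction with
    | mem x hx =>
      obtain ⟨i, rfl⟩ := hx
      intro j
      simp [Pi.single_apply]
    | zero => simp
    | add x y _ _ hx hy => intro j; simp [hx j, hy j]
    | smul c x _ hx => intro j; simp [hx j]
  · intro h
    have hv : v = ∑ i : Fin n, v (Sum.inl i) • (Pi.single (Sum.inl i) (1 : ℂ) : (Fin n ⊕ Fin n) → ℂ) := by
      funext x
      cases x with
      | inl i => simp [Finset.sum_apply, Pi.single_apply]
      | inr j => simp [Finset.sum_apply, Pi.single_apply, h j]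
    rw [hv]
    exact Submodule.sum_mem _ fun i _ =>
      Submodule.smul_mem _ _ (Submodule.subset_span ⟨i, rfl⟩)

/-- The subgroup `P₀ = {[[a, b], [0, (aᵀ)⁻¹]] : a ∈ GL_n(ℂ), a⁻¹b symmetric}` of
`Sp_{2n}(ℂ)` is exactly the stabilizer in `Sp_{2n}(ℂ)` of the subspace
`⟨e₁, …, eₙ⟩ ⊆ ℂ^{2n}` spanned by the first `n` standard basis vectors. -/
theorem stmt4 (n : ℕ) :
    {A : Matrix (Fin n ⊕ Fin n) (Fin n ⊕ Fin n) ℂ |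
        Aᵀ * fromBlocks 0 (-1) 1 0 * A = fromBlocks 0 (-1) 1 0 ∧
        ∃ a b : Matrix (Fin n) (Fin n) ℂ, IsUnit a ∧ (a⁻¹ * b)ᵀ = a⁻¹ * b ∧
          A = fromBlocks a b 0 (aᵀ)⁻¹}
      = {A | Aᵀ * fromBlocks 0 (-1) 1 0 * A = fromBlocks 0 (-1) 1 0 ∧
          ∀ v ∈ Submodule.span ℂ
              (Set.range fun i : Fin n => Pi.single (Sum.inl i : Fin n ⊕ Fin n) (1 : ℂ)),
            A.mulVec v ∈ Submodule.span ℂ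
              (Set.range fun i : Fin n => Pi.single (Sum.inl i : Fin n ⊕ Fin n) (1 : ℂ))} := by
  ext A
  simp only [Set.mem_setOf_eq]
  constructor
  · rintro ⟨hJ, a, b, ha, hs, rfl⟩
    refine ⟨hJ, fun v hv => ?_⟩
    rw [mem_span_inl_iff] at hv ⊢
    intro j
    simp [mulVec, dotProduct, Fintype.sum_sum_type, fromBlocks, hv]
  · rintro ⟨hJ, hstab⟩
    refine ⟨hJ, A.toBlocks₁₁, A.toBlocks₁₂, ?_⟩
    have hc : A.toBlocks₂₁ = 0 := by
      ext j i
      have h1 : (Pi.single (Sum.inl i) (1 : ℂ) : (Fin n ⊕ Fin n) → ℂ) ∈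
          Submodule.span ℂ
            (Set.range fun i : Fin n => Pi.single (Sum.inl i : Fin n ⊕ Fin n) (1 : ℂ)) :=
        Submodule.subset_span ⟨i, rfl⟩
      have h2 := (mem_span_inl_iff n _).mp (hstab _ h1) j
      simpa [mulVec_single, toBlocks₂₁] using h2
    set a := A.toBlocks₁₁ with ha'
    set b := A.toBlocks₁₂ with hb'
    set d := A.toBlocks₂₂ with hd'
    have hA : A = fromBlocks a b 0 d := by
      rw [ha', hb', hd', ← hc, fromBlocks_toBlocks]
    rw [hA] at hJ
    rw [show (fromBlocks 0 (-1) 1 0 : Matrix (Fin n ⊕ Fin n) (Fin n ⊕ Fin n) ℂ) =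
        fromBlocks (0 : Matrix (Fin n) (Fin n) ℂ) (-1) 1 0 from rfl] at hJ
    rw [fromBlocks_transpose, fromBlocks_multiply, fromBlocks_multiply] at hJ
    have h11 := congrArg Matrix.toBlocks₁₂ hJ
    have h21 := congrArg Matrix.toBlocks₂₁ hJ
    have h22 := congrArg Matrix.toBlocks₂₂ hJ
    simp only [toBlocks_fromBlocks₁₂, toBlocks_fromBlocks₂₁, toBlocks_fromBlocks₂₂] at h11 h21 h22
    have had : aᵀ * d = 1 := by
      have h := h11
      simp only [Matrix.mul_zero, Matrix.zero_mul, Matrix.transpose_zero, Matrix.mul_neg,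
        Matrix.mul_one, Matrix.neg_mul, add_zero, zero_add, neg_inj] at h
      exact h
    have hda : dᵀ * a = 1 := by
      have h := h21
      simp only [Matrix.mul_zero, Matrix.zero_mul, Matrix.transpose_zero, Matrix.mul_neg,
        Matrix.mul_one, Matrix.neg_mul, add_zero, zero_add, neg_zero] at h
      exact h
    have hdb : dᵀ * b = bᵀ * d := by
      have h := h22
      simp only [Matrix.mul_zero, Matrix.zero_mul, Matrix.transpose_zero, Matrix.mul_neg,
        Matrix.mul_one, Matrix.neg_mul, add_zero, zero_add, ← sub_eq_add_neg,
        sub_eq_zero] at h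
      exact h
    have had' : a * dᵀ = 1 := mul_eq_one_comm.mp hda
    have haU : IsUnit a := ⟨⟨a, dᵀ, had', hda⟩, rfl⟩
    have hainv : a⁻¹ = dᵀ := Matrix.inv_eq_right_inv had'
    have hdinv : (aᵀ)⁻¹ = d := Matrix.inv_eq_right_inv had
    refine ⟨haU, ?_, by rw [hA, hdinv]⟩
    rw [hainv, Matrix.transpose_mul, Matrix.transpose_transpose, hdb]
end

section
/- The Cayley transform z ↦ i(1 + z)(1 - z)⁻¹ maps the bounded domain D₀ = {z symmetric n×n complex : 1 - z z̄ positive definite} bijectively onto the Siegel upper half space S₀ = {Z symmetric : Im Z positive definite}, with inverse Z ↦ (Z - i)(Z + i)⁻¹. -/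
open Matrix
open scoped ComplexOrder

/-- The Siegel upper half space: symmetric complex matrices with positive definite
imaginary part. -/
def SiegelSet (n : ℕ) : Set (Matrix (Fin n) (Fin n) ℂ) :=
  {Z | Zᵀ = Z ∧ (Matrix.of fun i j => (Z i j).im).PosDef}

/-- The bounded domain `D₀`: symmetric complex matrices `z` with `1 - z z̄` positive
definite. -/
def DiskSet (n : ℕ) : Set (Matrix (Fin n) (Fin n) ℂ) :=
  {z | zᵀ = z ∧ (1 - z * z.map (starRingEnd ℂ)).PosDef}

/-!
With `u = (1 - z)⁻¹` and `v = (Z + i)⁻¹` both maps are affine: `i(1 + z)(1 - z)⁻¹ = i(2u - 1)` and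
`(Z - i)(Z + i)⁻¹ = 1 - 2i v`. From these forms the two compositions are the identity, and for the
images `W` of `z` and `w` of `Z` one reads off the congruences `i(Wᴴ - W) = 2 u (1 - z zᴴ) uᴴ` and
`1 - w wᴴ = 2 v (i(Zᴴ - Z)) vᴴ`, which carry positive definiteness across. For symmetric matrices
`z̄ = zᴴ` and `i(Zᴴ - Z) = 2 Im Z`, so both domains are cut out by these Hermitian forms. The
matrices `1 - z` and `Z + i` are invertible because a matrix `A` with `A + Aᴴ` positive definite
has trivial kernel.
-/

open Complex

namespace Matrix

section OfReal

variable {ι : Type*} [Fintype ι]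

lemma re_star_dotProduct_map_ofReal_mulVec (M : Matrix ι ι ℝ) (x : ι → ℂ) :
    (star x ⬝ᵥ (M.map ((↑) : ℝ → ℂ) *ᵥ x)).re =
      (fun i ↦ (x i).re) ⬝ᵥ (M *ᵥ fun i ↦ (x i).re) +
        (fun i ↦ (x i).im) ⬝ᵥ (M *ᵥ fun i ↦ (x i).im) := by
  simp only [dotProduct, mulVec, Complex.re_sum, Finset.mul_sum, ← Finset.sum_add_distrib]
  refine Finset.sum_congr rfl fun i _ ↦ Finset.sum_congr rfl fun j _ ↦ ?_
  simp

lemma posDef_map_ofReal_iff {M : Matrix ι ι ℝ} :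
    (M.map ((↑) : ℝ → ℂ)).PosDef ↔ M.PosDef := by
  have hherm : (M.map ((↑) : ℝ → ℂ)).IsHermitian ↔ M.IsHermitian := by
    rw [IsHermitian, IsHermitian, ← conjTranspose_map _ fun _ ↦ (conj_ofReal _).symm,
      (map_injective ofReal_injective).eq_iff]
  simp only [posDef_iff_dotProduct_mulVec, hherm, and_congr_right_iff]
  intro hM
  constructor
  · intro h x hx
    have hx' : ((↑) ∘ x : ι → ℂ) ≠ 0 := fun h0 ↦ hx (funext fun i ↦ by simpa using congrFun h0 i)
    simpa [re_star_dotProduct_map_ofReal_mulVec] using (Complex.pos_iff.mp (h hx')).1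
  · intro h x hx
    have him := (hM.map _ fun _ ↦ (conj_ofReal _).symm).im_star_dotProduct_mulVec_self x
    rw [RCLike.im_to_complex] at him
    rw [Complex.pos_iff, re_star_dotProduct_map_ofReal_mulVec, him]
    refine ⟨?_, rfl⟩
    by_cases hre : (fun i ↦ (x i).re) = 0
    · have him : (fun i ↦ (x i).im) ≠ 0 := fun h0 ↦ hx (funext fun i ↦
        Complex.ext (congrFun hre i) (congrFun h0 i))
      simpa [hre] using h him
    · exact add_pos_of_pos_of_nonneg (h hre)
        ((posDef_iff_dotProduct_mulVec.mpr ⟨hM, h⟩).posSemidef.dotProduct_mulVec_nonneg _)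

end OfReal

section Field

variable {ι K : Type*} [Fintype ι] [DecidableEq ι] [Field K]

lemma inv_smul_nonsing_inv {A : Matrix ι ι K} {c : K} (hc : c ≠ 0) (hA : IsUnit A) :
    (c • A⁻¹)⁻¹ = c⁻¹ • A :=
  inv_eq_left_inv <| by
    rw [smul_mul_smul_comm, inv_mul_cancel₀ hc, one_smul,
      mul_nonsing_inv _ ((isUnit_iff_isUnit_det A).mp hA)]

variable [PartialOrder K] [StarRing K]

lemma isUnit_of_posDef_add_conjTranspose {A : Matrix ι ι K} (h : (A + Aᴴ).PosDef) :
    IsUnit A := by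
  by_contra hA
  rw [isUnit_iff_isUnit_det, isUnit_iff_ne_zero, not_not] at hA
  obtain ⟨x, hx, hAx⟩ := exists_mulVec_eq_zero_iff.mpr hA
  have := h.dotProduct_mulVec_pos hx
  rw [add_mulVec, dotProduct_add, hAx, dotProduct_mulVec, ← star_mulVec, hAx] at this
  simp at this

lemma isUnit_one_sub_of_posDef [StarOrderedRing K] {z : Matrix ι ι K}
    (h : (1 - z * zᴴ).PosDef) : IsUnit (1 - z) := by
  refine isUnit_of_posDef_add_conjTranspose ?_
  have : (1 - z) + (1 - z)ᴴ = (1 - z * zᴴ) + (1 - z) * (1 - z)ᴴ := by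
    simp only [conjTranspose_sub, conjTranspose_one]
    noncomm_ring
  rw [this]
  exact h.add_posSemidef (posSemidef_self_mul_conjTranspose _)

end Field

lemma posDef_real_smul_iff {ι : Type*} {A : Matrix ι ι ℂ} {c : ℝ} (hc : 0 < c) :
    (c • A).PosDef ↔ A.PosDef :=
  ⟨fun h ↦ by simpa [smul_smul, hc.ne'] using h.smul (inv_pos.mpr hc), fun h ↦ h.smul hc⟩

lemma map_starRingEnd_eq_conjTranspose {ι : Type*} {z : Matrix ι ι ℂ} (hz : zᵀ = z) :
    z.map (starRingEnd ℂ) = zᴴ := by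
  rw [conjTranspose, hz]
  rfl

variable {ι : Type*} [Fintype ι] [DecidableEq ι]

lemma isUnit_add_I_smul_one {Z : Matrix ι ι ℂ} (h : (I • (Zᴴ - Z)).PosDef) :
    IsUnit (Z + I • 1) := by
  have key : (-I) • (Z + I • 1) + ((-I) • (Z + I • 1))ᴴ = I • (Zᴴ - Z) + (2 : ℂ) • 1 := by
    simp only [conjTranspose_add, conjTranspose_smul, conjTranspose_one, star_neg,
      Complex.star_def, conj_I]
    match_scalars <;> ring_nf
    simp [I_sq]
  have := isUnit_of_posDef_add_conjTranspose (key ▸ h.add (PosDef.one.smul two_pos))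
  exact (isUnit_smul_iff (Units.mk0 (-I) (by simp)) _).mp this

noncomputable def cayleyTransform (z : Matrix ι ι ℂ) : Matrix ι ι ℂ :=
  I • ((1 + z) * (1 - z)⁻¹)

noncomputable def cayleyTransformInv (Z : Matrix ι ι ℂ) : Matrix ι ι ℂ :=
  (Z - I • 1) * (Z + I • 1)⁻¹

variable {z Z : Matrix ι ι ℂ}

private lemma two_mul_I_ne_zero : (2 : ℂ) * I ≠ 0 := by simp

lemma cayleyTransform_eq (hz : IsUnit (1 - z)) :
    cayleyTransform z = I • ((2 : ℂ) • (1 - z)⁻¹ - 1) := by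
  rw [cayleyTransform, show 1 + z = (2 : ℂ) • 1 - (1 - z) by module, sub_mul, smul_mul_assoc,
    one_mul, mul_nonsing_inv _ ((isUnit_iff_isUnit_det _).mp hz)]

lemma cayleyTransformInv_eq (hZ : IsUnit (Z + I • 1)) :
    cayleyTransformInv Z = 1 - (2 * I) • (Z + I • 1)⁻¹ := by
  rw [cayleyTransformInv, show Z - I • 1 = Z + I • 1 - (2 * I) • 1 by module, sub_mul,
    smul_mul_assoc, one_mul, mul_nonsing_inv _ ((isUnit_iff_isUnit_det _).mp hZ)]

lemma cayleyTransformInv_cayleyTransform (hz : IsUnit (1 - z)) :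
    cayleyTransformInv (cayleyTransform z) = z := by
  have hsub : cayleyTransform z - I • 1 = (2 * I) • ((1 - z)⁻¹ - 1) := by
    rw [cayleyTransform_eq hz]; module
  have hadd : cayleyTransform z + I • 1 = (2 * I) • (1 - z)⁻¹ := by
    rw [cayleyTransform_eq hz]; module
  rw [cayleyTransformInv, hsub, hadd, inv_smul_nonsing_inv two_mul_I_ne_zero hz,
    smul_mul_smul_comm, mul_inv_cancel₀ two_mul_I_ne_zero, one_smul, sub_mul,
    nonsing_inv_mul _ ((isUnit_iff_isUnit_det _).mp hz), one_mul, sub_sub_cancel]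

lemma cayleyTransform_cayleyTransformInv (hZ : IsUnit (Z + I • 1)) :
    cayleyTransform (cayleyTransformInv Z) = Z := by
  rw [cayleyTransform, cayleyTransformInv_eq hZ, sub_sub_cancel,
    inv_smul_nonsing_inv two_mul_I_ne_zero hZ, mul_smul_comm, add_sub_assoc', sub_mul,
    smul_mul_assoc, nonsing_inv_mul _ ((isUnit_iff_isUnit_det _).mp hZ), add_mul, one_mul]
  match_scalars <;> field_simp <;> norm_num

lemma transpose_cayleyTransform (hz : IsUnit (1 - z)) (hzt : zᵀ = z) :
    (cayleyTransform z)ᵀ = cayleyTransform z := by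
  rw [cayleyTransform_eq hz, transpose_smul, transpose_sub, transpose_smul, transpose_one,
    transpose_nonsing_inv, transpose_sub, transpose_one, hzt]

lemma transpose_cayleyTransformInv (hZ : IsUnit (Z + I • 1)) (hZt : Zᵀ = Z) :
    (cayleyTransformInv Z)ᵀ = cayleyTransformInv Z := by
  rw [cayleyTransformInv_eq hZ, transpose_sub, transpose_smul, transpose_one,
    transpose_nonsing_inv, transpose_add, transpose_smul, transpose_one, hZt]

lemma I_smul_conjTranspose_cayleyTransform_sub (hz : IsUnit (1 - z)) :
    I • ((cayleyTransform z)ᴴ - cayleyTransform z) =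
      (2 : ℝ) • ((1 - z)⁻¹ * (1 - z * zᴴ) * (1 - z)⁻¹ᴴ) := by
  rw [cayleyTransform_eq hz]
  set u := (1 - z)⁻¹
  have huz : u * z = u - 1 := by
    have := nonsing_inv_mul _ ((isUnit_iff_isUnit_det _).mp hz)
    rw [mul_sub, mul_one] at this
    rw [← this]; abel
  have : u * (1 - z * zᴴ) * uᴴ = u * uᴴ - (u * z) * (u * z)ᴴ := by
    rw [conjTranspose_mul]; noncomm_ring
  rw [this, huz]
  simp only [conjTranspose_smul, conjTranspose_sub, conjTranspose_one, star_def, conj_I,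
    mul_sub, sub_mul, one_mul, mul_one, smul_sub, map_ofNat]
  match_scalars <;> ring_nf <;> simp [I_sq]

lemma one_sub_cayleyTransformInv_mul_conjTranspose (hZ : IsUnit (Z + I • 1)) :
    1 - cayleyTransformInv Z * (cayleyTransformInv Z)ᴴ =
      (2 : ℝ) • ((Z + I • 1)⁻¹ * (I • (Zᴴ - Z)) * (Z + I • 1)⁻¹ᴴ) := by
  rw [cayleyTransformInv_eq hZ]
  set v := (Z + I • 1)⁻¹
  have hvZ : v * Z = 1 - I • v := by
    have := nonsing_inv_mul _ ((isUnit_iff_isUnit_det _).mp hZ)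
    rw [mul_add, mul_smul_comm, mul_one] at this
    rw [← this]; abel
  have : v * (I • (Zᴴ - Z)) * vᴴ = I • (v * (v * Z)ᴴ - (v * Z) * vᴴ) := by
    rw [conjTranspose_mul]
    simp only [mul_sub, sub_mul, mul_smul_comm, smul_mul_assoc, mul_assoc]
  rw [this, hvZ]
  simp only [conjTranspose_smul, conjTranspose_sub, conjTranspose_one, star_def, conj_I,
    mul_sub, sub_mul, one_mul, mul_one, smul_sub, smul_mul_assoc, mul_smul_comm, map_mul,
    map_ofNat, smul_smul]
  match_scalars <;> ring_nf

lemma posDef_I_smul_conjTranspose_cayleyTransform_sub (h : (1 - z * zᴴ).PosDef) :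
    (I • ((cayleyTransform z)ᴴ - cayleyTransform z)).PosDef := by
  have hz := isUnit_one_sub_of_posDef h
  rw [I_smul_conjTranspose_cayleyTransform_sub hz, posDef_real_smul_iff two_pos]
  exact (isUnit_nonsing_inv_iff.mpr hz).posDef_star_right_conjugate_iff.mpr h

lemma posDef_one_sub_cayleyTransformInv_mul_conjTranspose (h : (I • (Zᴴ - Z)).PosDef) :
    (1 - cayleyTransformInv Z * (cayleyTransformInv Z)ᴴ).PosDef := by
  have hZ := isUnit_add_I_smul_one h
  rw [one_sub_cayleyTransformInv_mul_conjTranspose hZ, posDef_real_smul_iff two_pos]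
  exact (isUnit_nonsing_inv_iff.mpr hZ).posDef_star_right_conjugate_iff.mpr h

end Matrix

lemma mem_diskSet_iff {n : ℕ} {z : Matrix (Fin n) (Fin n) ℂ} :
    z ∈ DiskSet n ↔ zᵀ = z ∧ (1 - z * zᴴ).PosDef :=
  and_congr_right fun hz ↦ by rw [map_starRingEnd_eq_conjTranspose hz]

lemma mem_siegelSet_iff {n : ℕ} {Z : Matrix (Fin n) (Fin n) ℂ} :
    Z ∈ SiegelSet n ↔ Zᵀ = Z ∧ (I • (Zᴴ - Z)).PosDef := by
  refine and_congr_right fun hZ ↦ ?_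
  have : I • (Zᴴ - Z) = (2 : ℝ) • (Matrix.of fun i j ↦ (Z i j).im).map ((↑) : ℝ → ℂ) := by
    ext i j
    have hji : Z j i = Z i j := congrFun (congrFun hZ i) j
    apply Complex.ext <;> simp [hji, two_mul]
  rw [this, posDef_real_smul_iff two_pos, posDef_map_ofReal_iff]

lemma cayleyTransform_mem_siegelSet {n : ℕ} {z : Matrix (Fin n) (Fin n) ℂ}
    (hz : z ∈ DiskSet n) : cayleyTransform z ∈ SiegelSet n := by
  obtain ⟨hzt, hpos⟩ := mem_diskSet_iff.mp hz
  exact mem_siegelSet_iff.mpr ⟨transpose_cayleyTransform (isUnit_one_sub_of_posDef hpos) hzt,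
    posDef_I_smul_conjTranspose_cayleyTransform_sub hpos⟩

lemma cayleyTransformInv_mem_diskSet {n : ℕ} {Z : Matrix (Fin n) (Fin n) ℂ}
    (hZ : Z ∈ SiegelSet n) : cayleyTransformInv Z ∈ DiskSet n := by
  obtain ⟨hZt, hpos⟩ := mem_siegelSet_iff.mp hZ
  exact mem_diskSet_iff.mpr ⟨transpose_cayleyTransformInv (isUnit_add_I_smul_one hpos) hZt,
    posDef_one_sub_cayleyTransformInv_mul_conjTranspose hpos⟩

/-- The Cayley transform `z ↦ i(1 + z)(1 - z)⁻¹` maps `D₀` bijectively onto the Siegel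
upper half space `S₀`, with inverse `Z ↦ (Z - i)(Z + i)⁻¹`. -/
theorem stmt7 (n : ℕ) :
    (∀ z ∈ DiskSet n, Complex.I • ((1 + z) * (1 - z)⁻¹) ∈ SiegelSet n) ∧
    (∀ Z ∈ SiegelSet n,
      (Z - Complex.I • (1 : Matrix (Fin n) (Fin n) ℂ)) *
        (Z + Complex.I • (1 : Matrix (Fin n) (Fin n) ℂ))⁻¹ ∈ DiskSet n) ∧
    (∀ z ∈ DiskSet n,
      (Complex.I • ((1 + z) * (1 - z)⁻¹) - Complex.I • (1 : Matrix (Fin n) (Fin n) ℂ)) *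
        (Complex.I • ((1 + z) * (1 - z)⁻¹) + Complex.I • (1 : Matrix (Fin n) (Fin n) ℂ))⁻¹
        = z) ∧
    (∀ Z ∈ SiegelSet n,
      Complex.I • ((1 + (Z - Complex.I • (1 : Matrix (Fin n) (Fin n) ℂ)) *
            (Z + Complex.I • (1 : Matrix (Fin n) (Fin n) ℂ))⁻¹) *
          (1 - (Z - Complex.I • (1 : Matrix (Fin n) (Fin n) ℂ)) *
            (Z + Complex.I • (1 : Matrix (Fin n) (Fin n) ℂ))⁻¹)⁻¹) = Z) :=
  ⟨fun _ hz ↦ cayleyTransform_mem_siegelSet hz,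
    fun _ hZ ↦ cayleyTransformInv_mem_diskSet hZ,
    fun _ hz ↦ cayleyTransformInv_cayleyTransform
      (isUnit_one_sub_of_posDef (mem_diskSet_iff.mp hz).2),
    fun _ hZ ↦ cayleyTransform_cayleyTransformInv
      (isUnit_add_I_smul_one (mem_siegelSet_iff.mp hZ).2)⟩
end

section
/- Let 𝔤 be a Lie superalgebra with root decomposition relative to a CSA 𝔥 contained in 𝔨, let 𝔪_r be a real form of 𝔤 containing the real form 𝔥_r of 𝔥, with associated antilinear involution X ↦ X̃ fixing 𝔪_r. If all roots are purely imaginary on 𝔥_r (so that 𝔤_α̃ = 𝔤_{-α} for every root α), then 𝔪_r + 𝔟⁺ = 𝔤, where 𝔟⁺ = 𝔥 ⊕ Σ_{α∈P} 𝔤_α is a Borel subalgebra. -/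
/-!
Every piece of the root decomposition `𝔤 = 𝔥 ⊕ ⨁_{α ∈ Δ} 𝔤_α` lies in `𝔟⁺` or is carried into
`𝔟⁺` by the involution: `𝔥 ⊆ 𝔟⁺`, `𝔤_α ⊆ 𝔟⁺` for `α ∈ P`, and for `α ∉ P` we have `-α ∈ P`, so
`X̃ ∈ 𝔤_{-α} ⊆ 𝔟⁺` for `X ∈ 𝔤_α`. In the second case `X = (X + X̃) - X̃` with `X + X̃ ∈ 𝔪_r`.
-/

section Involution

variable {R V : Type*} [Ring R] [AddCommGroup V] [Module R V] {conj : V →ₗ[R] V}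

theorem mem_eqLocus_id_sup_of_map_mem (hinv : ∀ x, conj (conj x) = x) {B : Submodule R V}
    {y : V} (hy : conj y ∈ B) : y ∈ LinearMap.eqLocus conj LinearMap.id ⊔ B := by
  have hfix : y + conj y ∈ LinearMap.eqLocus conj LinearMap.id := by
    simp only [LinearMap.mem_eqLocus, map_add, hinv, LinearMap.id_apply, add_comm]
  simpa using Submodule.add_mem_sup hfix (B.neg_mem hy)

theorem eqLocus_id_sup_eq_top_of_iSup_eq_top (hinv : ∀ x, conj (conj x) = x) {ι : Type*}
    {N : ι → Submodule R V} (hN : iSup N = ⊤) {B : Submodule R V}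
    (hNB : ∀ i, ∀ y ∈ N i, y ∈ B ∨ conj y ∈ B) :
    LinearMap.eqLocus conj LinearMap.id ⊔ B = ⊤ := by
  refine eq_top_iff.mpr (hN ▸ iSup_le fun i y hy => ?_)
  rcases hNB i y hy with hyB | hconjB
  · exact Submodule.mem_sup_right hyB
  · exact mem_eqLocus_id_sup_of_map_mem hinv hconjB

end Involution

theorem stmt14_general {L : Type*} [LieRing L] [LieAlgebra ℂ L]
    (conj : L →ₗ[ℝ] L)
    (hinv : ∀ x, conj (conj x) = x)
    (H : LieSubalgebra ℂ L) [DecidableEq (H →ₗ[ℂ] ℂ)]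
    (Δ : Finset (H →ₗ[ℂ] ℂ)) (gsp : (H →ₗ[ℂ] ℂ) → Submodule ℂ L)
    (hdec : DirectSum.IsInternal fun i : Option {α // α ∈ Δ} =>
      i.elim H.toSubmodule fun α => gsp α.1)
    (P : Finset (H →ₗ[ℂ] ℂ))
    (hpos : ∀ α ∈ Δ, (α ∈ P ∨ -α ∈ P) ∧ ¬(α ∈ P ∧ -α ∈ P))
    (hconjroot : ∀ α ∈ Δ, ∀ x ∈ gsp α, conj x ∈ gsp (-α)) :
    ∀ x : L, ∃ m b : L, conj m = m ∧
      b ∈ (H.toSubmodule ⊔ ⨆ α ∈ P, gsp α) ∧ x = m + b := by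
  set B := H.toSubmodule ⊔ ⨆ α ∈ P, gsp α
  have hroot_mem : ∀ α ∈ P, ∀ y ∈ gsp α, y ∈ B := fun α hα y hy =>
    Submodule.mem_sup_right (Submodule.mem_iSup_of_mem α (Submodule.mem_iSup_of_mem hα hy))
  have htop : LinearMap.eqLocus conj LinearMap.id ⊔ B.restrictScalars ℝ = ⊤ := by
    have hspan : (⨆ i : Option {α // α ∈ Δ},
        (i.elim H.toSubmodule fun α => gsp α.1).restrictScalars ℝ) = ⊤ := by
      rw [← Submodule.restrictScalars_iSup, hdec.submodule_iSup_eq_top,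
        Submodule.restrictScalars_top]
    refine eqLocus_id_sup_eq_top_of_iSup_eq_top hinv hspan ?_
    rintro (_ | ⟨α, hαΔ⟩) y hy
    · exact .inl (Submodule.mem_sup_left hy)
    · by_cases hαP : α ∈ P
      · exact .inl (hroot_mem α hαP y hy)
      · exact .inr (hroot_mem (-α) (((hpos α hαΔ).1).resolve_left hαP) _ (hconjroot α hαΔ y hy))
  intro x
  obtain ⟨m, hm, b, hb, hx⟩ := Submodule.mem_sup.mp (htop ▸ Submodule.mem_top : x ∈ _)
  exact ⟨m, b, hm, hb, hx.symm⟩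

/-- Let `𝔤` be a (super) Lie algebra with root decomposition relative to a CSA `𝔥`,
let `𝔪_r` be a real form of `𝔤` (the fixed points of the antilinear involution
`X ↦ conj X`) containing the real form `𝔥_r` of `𝔥`. If all roots are purely imaginary
on `𝔥_r`, so that `conj` maps `𝔤_α` into `𝔤_{-α}` for every root `α`, then
`𝔪_r + 𝔟⁺ = 𝔤`, where `𝔟⁺ = 𝔥 ⊕ Σ_{α∈P} 𝔤_α` is a Borel subalgebra. -/
theorem stmt14 {L : Type*} [LieRing L] [LieAlgebra ℂ L]
    (conj : L →ₗ[ℝ] L)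
    (hconjsmul : ∀ (c : ℂ) (x : L), conj (c • x) = (starRingEnd ℂ) c • conj x)
    (hinv : ∀ x, conj (conj x) = x)
    (hlie : ∀ x y, conj ⁅x, y⁆ = ⁅conj x, conj y⁆)
    (H : LieSubalgebra ℂ L) [DecidableEq (H →ₗ[ℂ] ℂ)]
    (hHconj : ∀ x ∈ H, conj x ∈ H)
    (Δ : Finset (H →ₗ[ℂ] ℂ)) (gsp : (H →ₗ[ℂ] ℂ) → Submodule ℂ L)
    (hroot : ∀ α ∈ Δ, ∀ h : H, ∀ x ∈ gsp α, ⁅(h : L), x⁆ = α h • x)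
    (hdec : DirectSum.IsInternal fun i : Option {α // α ∈ Δ} =>
      i.elim H.toSubmodule fun α => gsp α.1)
    (P : Finset (H →ₗ[ℂ] ℂ)) (hPsub : P ⊆ Δ)
    (hpos : ∀ α ∈ Δ, (α ∈ P ∨ -α ∈ P) ∧ ¬(α ∈ P ∧ -α ∈ P))
    (hconjroot : ∀ α ∈ Δ, ∀ x ∈ gsp α, conj x ∈ gsp (-α)) :
    ∀ x : L, ∃ m b : L, conj m = m ∧
      b ∈ (H.toSubmodule ⊔ ⨆ α ∈ P, gsp α) ∧ x = m + b :=
  stmt14_general conj hinv H Δ gsp hdec P hpos hconjroot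
end
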